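/- arXiv:2307.01078 — 2 statements merged into one kernel-verified Lean document; each statement's English description precedes it below -/
import Mathlib

section
/- First-order equality of diagonal symplectic sub-blocks (equation (6) of Proposition 1): Let A be a 2n×2n real positive definite matrix with distinct symplectic eigenvalues μ₁ < ⋯ < μ_r and index sets α_i = {j : d_j(A) = μ_i}, β_i = {j + n : j ∈ α_i}. Let S ∈ Sp(2n; A) be fixed. Then there exist constants c > 0 and δ > 0 such that for every 2n×2n real symmetric matrix H with ‖H‖ < δ and A + H positive definite, every S̃ ∈ Sp(2n; A+H), and every i = 1, …, r, one has ‖(S⁻¹S̃)_{α_i α_i} − (S⁻¹S̃)_{β_i β_i}‖ ≤ c‖H‖. -/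
open Matrix
open scoped Matrix.Norms.L2Operator Classical

/-- The canonical symplectic form matrix `((0, Iₘ), (−Iₘ, 0))` (the paper's `J₂ₘ`). -/
def J' (m : Type*) [Fintype m] [DecidableEq m] : Matrix (m ⊕ m) (m ⊕ m) ℝ :=
  Matrix.fromBlocks 0 1 (-1) 0

/-!
Put `T = S⁻¹S̃`, `D = diag(d, d)`, `E = diag(e, e)` and let `J` be the standard symplectic form.
Symplecticity turns `SᵀAS = D` and `S̃ᵀ(A + H)S̃ = E` into `J A S = S J D` and
`J (A + H) S̃ = S̃ J E`, so `T` solves the Sylvester equation `J D T - T J E = -S⁻¹ J H S̃`.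
Adding its off-diagonal blocks on the rows where `d = μᵢ` gives
`(μᵢ + e_k) (T_{j,k} - T_{j+n,k+n}) = O(‖S⁻¹‖ ‖H‖ ‖S̃ column k‖)`.
Dividing column `k` by `μᵢ + e_k` is harmless: `S̃ F` with `F = diag(1/(μᵢ + e_k))` satisfies
`(S̃F)ᵀ(A + H)(S̃F) = diag(e_k/(μᵢ + e_k)²) ≤ 1/(4μᵢ)`, and `A + H` stays uniformly coercive for
small `H`, so `‖S̃F‖ = O(1/√μᵢ)` whatever the symplectic eigenvalues `e` of `A + H` are.
-/

open scoped RealInnerProductSpace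

theorem div_add_sq_le_inv_four_mul {μ e : ℝ} (hμ : 0 < μ) (he : 0 ≤ e) :
    e / (μ + e) ^ 2 ≤ (4 * μ)⁻¹ := by
  rw [div_le_iff₀ (by positivity), inv_mul_eq_div, le_div_iff₀ (by positivity)]
  nlinarith [sq_nonneg (μ - e)]

namespace Matrix

section Norms

variable {𝕜 : Type*} [RCLike 𝕜] {m n : Type*} [Fintype m] [Fintype n]

theorem l2_opNorm_one_le [DecidableEq n] : ‖(1 : Matrix n n 𝕜)‖ ≤ 1 := by
  rw [cstar_norm_def, map_one]
  exact ContinuousLinearMap.norm_id_le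

theorem l2_opNorm_le_one_of_conjTranspose_mul_self_eq_one [DecidableEq n] {A : Matrix m n 𝕜}
    (hA : Aᴴ * A = 1) : ‖A‖ ≤ 1 := by
  have h := l2_opNorm_conjTranspose_mul_self A
  rw [hA] at h
  nlinarith [l2_opNorm_one_le (𝕜 := 𝕜) (n := n), norm_nonneg A]

theorem l2_opNorm_one_submatrix_le {α : Type*} [Fintype α] [DecidableEq m] {f : α → m}
    (hf : Function.Injective f) : ‖(1 : Matrix m m 𝕜).submatrix f id‖ ≤ 1 := by
  rw [← l2_opNorm_conjTranspose]
  refine l2_opNorm_le_one_of_conjTranspose_mul_self_eq_one ?_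
  rw [conjTranspose_conjTranspose, conjTranspose_submatrix, conjTranspose_one,
    ← submatrix_mul _ _ _ _ _ Function.bijective_id, Matrix.one_mul, submatrix_one _ hf]

theorem l2_opNorm_submatrix_le (M : Matrix m n 𝕜) {α β : Type*} [Fintype α] [Fintype β]
    {f : α → m} {g : β → n} (hf : Function.Injective f) (hg : Function.Injective g) :
    ‖M.submatrix f g‖ ≤ ‖M‖ := by
  have hM : M.submatrix f g =
      (1 : Matrix m m 𝕜).submatrix f id * M * ((1 : Matrix n n 𝕜).submatrix g id)ᴴ := by
    rw [conjTranspose_submatrix, conjTranspose_one, ← submatrix_id_id M,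
      ← submatrix_mul _ _ _ _ _ Function.bijective_id,
      ← submatrix_mul _ _ _ _ _ Function.bijective_id, Matrix.one_mul, Matrix.mul_one,
      submatrix_submatrix]
    rfl
  rw [hM]
  calc _ ≤ ‖(1 : Matrix m m 𝕜).submatrix f id‖ * ‖M‖ *
        ‖((1 : Matrix n n 𝕜).submatrix g id)ᴴ‖ :=
        (l2_opNorm_mul _ _).trans (mul_le_mul_of_nonneg_right (l2_opNorm_mul _ _) (norm_nonneg _))
    _ ≤ 1 * ‖M‖ * 1 := by
        rw [l2_opNorm_conjTranspose]
        gcongr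
        · exact l2_opNorm_one_submatrix_le hf
        · exact l2_opNorm_one_submatrix_le hg
    _ = ‖M‖ := by ring

end Norms

section Coercive

variable {n : Type*} [Fintype n] [DecidableEq n]

def IsCoerciveWith (B : Matrix n n ℝ) (κ : ℝ) : Prop :=
  ∀ x : EuclideanSpace ℝ n, κ * ‖x‖ ^ 2 ≤ ⟪x, toEuclideanCLM (𝕜 := ℝ) B x⟫

theorem PosDef.exists_isCoerciveWith {A : Matrix n n ℝ} (hA : A.PosDef) :
    ∃ κ > 0, A.IsCoerciveWith κ := by
  set q : EuclideanSpace ℝ n → ℝ := fun x => ⟪x, toEuclideanCLM (𝕜 := ℝ) A x⟫ with hq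
  have hpos : ∀ x, x ≠ 0 → 0 < q x := fun x hx => by
    simpa [hq, inner_toEuclideanCLM] using
      hA.dotProduct_mulVec_pos (x := x.ofLp) (by simpa using hx)
  have hsmul : ∀ (t : ℝ) x, q (t • x) = t ^ 2 * q x := fun t x => by
    simp only [hq, map_smul, inner_smul_left, inner_smul_right, conj_trivial]
    ring
  rcases subsingleton_or_nontrivial (EuclideanSpace ℝ n) with h | h
  · exact ⟨1, one_pos, fun x => by simp [Subsingleton.elim x 0]⟩
  obtain ⟨x₀, hx₀, hmin⟩ := (isCompact_sphere (0 : EuclideanSpace ℝ n) 1).exists_isMinOn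
    (NormedSpace.sphere_nonempty.mpr zero_le_one) (by fun_prop : Continuous q).continuousOn
  refine ⟨q x₀, hpos x₀ (ne_zero_of_mem_unit_sphere ⟨x₀, hx₀⟩), fun x => ?_⟩
  rcases eq_or_ne x 0 with rfl | hx
  · simp
  have hnx : 0 < ‖x‖ := norm_pos_iff.mpr hx
  have hq₀ := hmin (show ‖x‖⁻¹ • x ∈ Metric.sphere 0 1 by simp [norm_smul, hnx.ne'])
  simp only [Set.mem_ofPred_eq, hsmul] at hq₀
  calc q x₀ * ‖x‖ ^ 2 ≤ ‖x‖⁻¹ ^ 2 * q x * ‖x‖ ^ 2 := by gcongr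
    _ = q x := by field_simp

theorem IsCoerciveWith.mono {B : Matrix n n ℝ} {κ κ' : ℝ} (hB : B.IsCoerciveWith κ)
    (hκ : κ' ≤ κ) : B.IsCoerciveWith κ' :=
  fun x => le_trans (by gcongr) (hB x)

theorem IsCoerciveWith.add {A : Matrix n n ℝ} {κ : ℝ} (hA : A.IsCoerciveWith κ)
    (H : Matrix n n ℝ) : (A + H).IsCoerciveWith (κ - ‖H‖) := fun x => by
  have hH : |⟪x, toEuclideanCLM (𝕜 := ℝ) H x⟫| ≤ ‖H‖ * ‖x‖ ^ 2 := calc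
    _ ≤ ‖x‖ * ‖toEuclideanCLM (𝕜 := ℝ) H x‖ := abs_real_inner_le_norm _ _
    _ ≤ ‖x‖ * (‖H‖ * ‖x‖) := by gcongr; exact (toEuclideanCLM (𝕜 := ℝ) H).le_opNorm x
    _ = ‖H‖ * ‖x‖ ^ 2 := by ring
  rw [map_add, _root_.add_apply, inner_add_right]
  linarith [hA x, neg_abs_le ⟪x, toEuclideanCLM (𝕜 := ℝ) H x⟫]

theorem IsCoerciveWith.l2_opNorm_le_of_transpose_mul_mul_eq {B W D : Matrix n n ℝ} {κ C : ℝ}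
    (hB : B.IsCoerciveWith κ) (hκ : 0 < κ) (hC : 0 ≤ C) (hW : Wᵀ * B * W = D)
    (hD : ‖D‖ ≤ κ * C ^ 2) : ‖W‖ ≤ C := by
  rw [cstar_norm_def]
  refine ContinuousLinearMap.opNorm_le_bound _ hC fun x => ?_
  set W' := toEuclideanCLM (𝕜 := ℝ) W
  have hquad : ⟪W' x, toEuclideanCLM (𝕜 := ℝ) B (W' x)⟫ = ⟪x, toEuclideanCLM (𝕜 := ℝ) D x⟫ := by
    rw [inner_toEuclideanCLM, inner_toEuclideanCLM, ← hW, ← mulVec_mulVec, ← mulVec_mulVec,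
      dotProduct_mulVec x, vecMul_transpose]
    rfl
  have hsq : κ * ‖W' x‖ ^ 2 ≤ κ * (C * ‖x‖) ^ 2 := calc
    κ * ‖W' x‖ ^ 2 ≤ ⟪x, toEuclideanCLM (𝕜 := ℝ) D x⟫ := hquad ▸ hB (W' x)
    _ ≤ ‖x‖ * ‖toEuclideanCLM (𝕜 := ℝ) D x‖ := real_inner_le_norm _ _
    _ ≤ ‖x‖ * (‖D‖ * ‖x‖) := by gcongr; exact (toEuclideanCLM (𝕜 := ℝ) D).le_opNorm x
    _ ≤ ‖x‖ * (κ * C ^ 2 * ‖x‖) := by gcongr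
    _ = κ * (C * ‖x‖) ^ 2 := by ring
  exact (pow_le_pow_iff_left₀ (norm_nonneg _) (by positivity) two_ne_zero).mp
    (le_of_mul_le_mul_left hsq hκ)

theorem IsCoerciveWith.l2_opNorm_mul_diagonal_inv_add_le {B W : Matrix n n ℝ} {e : n → ℝ}
    {κ μ : ℝ} (hB : B.IsCoerciveWith κ) (hκ : 0 < κ) (hμ : 0 < μ) (he : ∀ k, 0 ≤ e k)
    (hW : Wᵀ * B * W = diagonal e) :
    ‖W * diagonal (fun k => (μ + e k)⁻¹)‖ ≤ (2 * √(κ * μ))⁻¹ := by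
  set g : n → ℝ := fun k => e k / (μ + e k) ^ 2
  have hWF : (W * diagonal (fun k => (μ + e k)⁻¹))ᵀ * B * (W * diagonal (fun k => (μ + e k)⁻¹)) =
      diagonal g := by
    rw [transpose_mul, diagonal_transpose, ← Matrix.mul_assoc, Matrix.mul_assoc _ Wᵀ,
      Matrix.mul_assoc _ (Wᵀ * B), hW, diagonal_mul_diagonal, diagonal_mul_diagonal]
    congr 1
    ext k
    simp only [g]
    field_simp
  have hg : ‖g‖ ≤ (4 * μ)⁻¹ := by
    refine (pi_norm_le_iff_of_nonneg (by positivity)).mpr fun k => ?_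
    rw [Real.norm_of_nonneg (by have := he k; positivity)]
    exact div_add_sq_le_inv_four_mul hμ (he k)
  refine hB.l2_opNorm_le_of_transpose_mul_mul_eq hκ (by positivity) hWF ?_
  refine (l2_opNorm_diagonal g).trans_le (hg.trans_eq ?_)
  rw [inv_pow, mul_pow, Real.sq_sqrt (by positivity)]
  field_simp
  ring

end Coercive

end Matrix

section Symplectic

variable {m : Type*} [Fintype m] [DecidableEq m]

theorem J'_eq_neg_J : J' m = -J m ℝ := by
  simp [J', J, fromBlocks_neg]

theorem mem_symplecticGroup_of_transpose_mul_J'_mul {S : Matrix (m ⊕ m) (m ⊕ m) ℝ}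
    (hS : Sᵀ * J' m * S = J' m) : S ∈ symplecticGroup m ℝ := by
  rw [SymplecticGroup.mem_iff', ← neg_inj, ← J'_eq_neg_J, ← hS, J'_eq_neg_J]
  simp

theorem l2_opNorm_J_le_one : ‖J m ℝ‖ ≤ 1 :=
  l2_opNorm_le_one_of_conjTranspose_mul_self_eq_one <| by simp [J_transpose, J_squared]

theorem J_mul_mul_eq_mul_J_mul {S B D : Matrix (m ⊕ m) (m ⊕ m) ℝ}
    (hS : S ∈ symplecticGroup m ℝ) (hD : Sᵀ * B * S = D) : J m ℝ * B * S = S * J m ℝ * D := by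
  calc J m ℝ * B * S = S * J m ℝ * Sᵀ * B * S := by rw [SymplecticGroup.mem_iff.mp hS]
    _ = S * J m ℝ * D := by rw [← hD]; simp only [Matrix.mul_assoc]

theorem J_mul_sub_mul_J_of_symplectic {S S' A H D E : Matrix (m ⊕ m) (m ⊕ m) ℝ}
    (hS : S ∈ symplecticGroup m ℝ) (hS' : S' ∈ symplecticGroup m ℝ)
    (hD : Sᵀ * A * S = D) (hE : S'ᵀ * (A + H) * S' = E) :
    J m ℝ * D * (S⁻¹ * S') - S⁻¹ * S' * J m ℝ * E = -(S⁻¹ * J m ℝ * H * S') := by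
  have hSu := SymplecticGroup.symplectic_det hS
  have hJD : J m ℝ * D = S⁻¹ * J m ℝ * A * S := calc
    J m ℝ * D = S⁻¹ * S * J m ℝ * D := by rw [nonsing_inv_mul _ hSu, Matrix.one_mul]
    _ = S⁻¹ * (J m ℝ * A * S) := by
      rw [J_mul_mul_eq_mul_J_mul hS hD]; simp only [Matrix.mul_assoc]
    _ = S⁻¹ * J m ℝ * A * S := by simp only [Matrix.mul_assoc]
  calc J m ℝ * D * (S⁻¹ * S') - S⁻¹ * S' * J m ℝ * E
      = S⁻¹ * J m ℝ * A * (S * S⁻¹) * S' - S⁻¹ * (S' * J m ℝ * E) := by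
        rw [hJD]; simp only [Matrix.mul_assoc]
    _ = -(S⁻¹ * J m ℝ * H * S') := by
        rw [mul_nonsing_inv _ hSu, ← J_mul_mul_eq_mul_J_mul hS' hE, Matrix.mul_one]
        simp only [Matrix.mul_add, Matrix.add_mul, Matrix.mul_assoc]
        abel

theorem add_mul_sub_eq_of_J_mul_sub_mul_J {T Y : Matrix (m ⊕ m) (m ⊕ m) ℝ} {d e : m → ℝ}
    (h : J m ℝ * diagonal (Sum.elim d d) * T - T * J m ℝ * diagonal (Sum.elim e e) = Y)
    (j k : m) :
    (d j + e k) * (T (.inl j) (.inl k) - T (.inr j) (.inr k)) =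
      Y (.inl j) (.inr k) + Y (.inr j) (.inl k) := by
  subst h
  simp only [J, Matrix.mul_assoc, Matrix.sub_apply, mul_apply, diagonal_apply, ite_mul, zero_mul,
    Finset.sum_ite_eq, Finset.mem_univ, ↓reduceIte, Fintype.sum_sum_type, fromBlocks_apply₁₁,
    Matrix.zero_apply, Sum.elim_inl, Finset.sum_const_zero, fromBlocks_apply₁₂, Matrix.neg_apply,
    one_apply, Sum.elim_inr, neg_mul, one_mul, Finset.sum_neg_distrib, zero_add, mul_ite, mul_zero,
    Finset.sum_ite_eq', mul_neg, fromBlocks_apply₂₂, add_zero, sub_neg_eq_add, fromBlocks_apply₂₁]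
  ring

theorem submatrix_sub_submatrix_eq_of_J_mul_sub_mul_J {T Y : Matrix (m ⊕ m) (m ⊕ m) ℝ}
    {d e : m → ℝ} {μ : ℝ}
    (h : J m ℝ * diagonal (Sum.elim d d) * T - T * J m ℝ * diagonal (Sum.elim e e) = Y)
    (he : ∀ k, μ + e k ≠ 0) {ι : Type*} {v : ι → m} (hdv : ∀ j, d (v j) = μ) :
    T.submatrix (Sum.inl ∘ v) (Sum.inl ∘ v) - T.submatrix (Sum.inr ∘ v) (Sum.inr ∘ v) =
      (Y * diagonal fun k => (μ + Sum.elim e e k)⁻¹).submatrix (Sum.inl ∘ v) (Sum.inr ∘ v) +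
        (Y * diagonal fun k => (μ + Sum.elim e e k)⁻¹).submatrix (Sum.inr ∘ v) (Sum.inl ∘ v) := by
  ext j k
  have hsum := add_mul_sub_eq_of_J_mul_sub_mul_J h (v j) (v k)
  have hμe := he (v k)
  rw [hdv] at hsum
  simp only [Matrix.sub_apply, Matrix.add_apply, submatrix_apply, Function.comp_apply,
    mul_diagonal, Sum.elim_inl, Sum.elim_inr]
  field_simp
  linear_combination hsum

end Symplectic

theorem norm_diag_subblock_sub_le {m : Type*} [Fintype m] [DecidableEq m]
    {S S' A H : Matrix (m ⊕ m) (m ⊕ m) ℝ} {d e : m → ℝ} {κ μ : ℝ}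
    (hS : S ∈ symplecticGroup m ℝ) (hS' : S' ∈ symplecticGroup m ℝ)
    (hSA : Sᵀ * A * S = diagonal (Sum.elim d d))
    (hS'A : S'ᵀ * (A + H) * S' = diagonal (Sum.elim e e)) (he : ∀ k, 0 < e k)
    (hAH : (A + H).IsCoerciveWith κ) (hκ : 0 < κ) (hμ : 0 < μ)
    {ι : Type*} [Fintype ι] {v : ι → m} (hv : Function.Injective v) (hdv : ∀ j, d (v j) = μ) :
    ‖(S⁻¹ * S').submatrix (Sum.inl ∘ v) (Sum.inl ∘ v) -
        (S⁻¹ * S').submatrix (Sum.inr ∘ v) (Sum.inr ∘ v)‖ ≤ ‖S⁻¹‖ / √(κ * μ) * ‖H‖ := by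
  set F : Matrix (m ⊕ m) (m ⊕ m) ℝ := diagonal fun k => (μ + Sum.elim e e k)⁻¹
  have hS'F : ‖S' * F‖ ≤ (2 * √(κ * μ))⁻¹ :=
    hAH.l2_opNorm_mul_diagonal_inv_add_le hκ hμ (by rintro (k | k) <;> exact (he k).le) hS'A
  have hYF : ‖-(S⁻¹ * J m ℝ * H * S') * F‖ ≤ ‖S⁻¹‖ * ‖H‖ * (2 * √(κ * μ))⁻¹ := calc
    _ = ‖S⁻¹ * J m ℝ * H * (S' * F)‖ := by
      rw [Matrix.neg_mul, norm_neg]; simp only [Matrix.mul_assoc]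
    _ ≤ ‖S⁻¹‖ * ‖J m ℝ‖ * ‖H‖ * ‖S' * F‖ := by grw [norm_mul_le, norm_mul_le, norm_mul_le]
    _ ≤ ‖S⁻¹‖ * 1 * ‖H‖ * (2 * √(κ * μ))⁻¹ := by gcongr; exact l2_opNorm_J_le_one
    _ = ‖S⁻¹‖ * ‖H‖ * (2 * √(κ * μ))⁻¹ := by ring
  rw [submatrix_sub_submatrix_eq_of_J_mul_sub_mul_J (J_mul_sub_mul_J_of_symplectic hS hS' hSA hS'A)
    (fun k => (add_pos hμ (he k)).ne') hdv]
  calc _ ≤ ‖-(S⁻¹ * J m ℝ * H * S') * F‖ + ‖-(S⁻¹ * J m ℝ * H * S') * F‖ :=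
        (norm_add_le _ _).trans (add_le_add
          (l2_opNorm_submatrix_le _ (Sum.inl_injective.comp hv) (Sum.inr_injective.comp hv))
          (l2_opNorm_submatrix_le _ (Sum.inr_injective.comp hv) (Sum.inl_injective.comp hv)))
    _ ≤ 2 * (‖S⁻¹‖ * ‖H‖ * (2 * √(κ * μ))⁻¹) := by linarith
    _ = ‖S⁻¹‖ / √(κ * μ) * ‖H‖ := by field_simp

theorem diag_subblocks_first_order_eq_general (n r : ℕ)
    (A : Matrix (Fin n ⊕ Fin n) (Fin n ⊕ Fin n) ℝ) (hA : A.PosDef)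
    (d : Fin n → ℝ) (μ : Fin r → ℝ)
    (hdpos : ∀ j, 0 < d j)
    (S : Matrix (Fin n ⊕ Fin n) (Fin n ⊕ Fin n) ℝ)
    (hS : Sᵀ * J' (Fin n) * S = J' (Fin n))
    (hSA : Sᵀ * A * S = Matrix.fromBlocks (Matrix.diagonal d) 0 0 (Matrix.diagonal d)) :
    ∃ c > 0, ∃ δ > 0,
      ∀ H : Matrix (Fin n ⊕ Fin n) (Fin n ⊕ Fin n) ℝ, H.IsSymm → ‖H‖ < δ → (A + H).PosDef →
      ∀ S' : Matrix (Fin n ⊕ Fin n) (Fin n ⊕ Fin n) ℝ,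
        S'ᵀ * J' (Fin n) * S' = J' (Fin n) →
        (∃ e : Fin n → ℝ, Monotone e ∧ (∀ j, 0 < e j) ∧
          S'ᵀ * (A + H) * S' = Matrix.fromBlocks (Matrix.diagonal e) 0 0 (Matrix.diagonal e)) →
        ∀ i : Fin r,
          ‖(S⁻¹ * S').submatrix
              (fun a : {a : Fin n // d a = μ i} => (Sum.inl a.val : Fin n ⊕ Fin n))
              (fun a : {a : Fin n // d a = μ i} => (Sum.inl a.val : Fin n ⊕ Fin n)) -
            (S⁻¹ * S').submatrix
              (fun a : {a : Fin n // d a = μ i} => (Sum.inr a.val : Fin n ⊕ Fin n))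
              (fun a : {a : Fin n // d a = μ i} => (Sum.inr a.val : Fin n ⊕ Fin n))‖
            ≤ c * ‖H‖ := by
  obtain ⟨κ, hκ, hAκ⟩ := hA.exists_isCoerciveWith
  -- junk (zero) when `μ i ≤ 0`, but then no `d a` equals `μ i`
  set c : Fin r → ℝ := fun i => ‖S⁻¹‖ / √(κ / 2 * μ i)
  have hc : ∀ i, 0 ≤ c i := fun i => by positivity
  refine ⟨1 + ∑ i, c i, by positivity, κ / 2, half_pos hκ, ?_⟩
  rintro H - hH - S' hS' ⟨e, -, he, hS'A⟩ i
  rcases isEmpty_or_nonempty {a // d a = μ i} with hα | ⟨⟨j, hj⟩⟩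
  · refine (norm_le_zero_iff.mpr ?_).trans (by positivity)
    ext a
    exact hα.elim a
  rw [fromBlocks_diagonal] at hSA hS'A
  refine (norm_diag_subblock_sub_le (mem_symplecticGroup_of_transpose_mul_J'_mul hS)
    (mem_symplecticGroup_of_transpose_mul_J'_mul hS') hSA hS'A he
    ((hAκ.add H).mono (by linarith)) (half_pos hκ) (hj ▸ hdpos j)
    Subtype.val_injective Subtype.prop).trans ?_
  gcongr
  exact (Finset.single_le_sum (fun i _ => hc i) (Finset.mem_univ i)).trans
    (le_add_of_nonneg_left zero_le_one)

/-- Equation (6) of Proposition 1: `(S⁻¹S̃)_{αᵢαᵢ} = (S⁻¹S̃)_{βᵢβᵢ} + O(‖H‖)`, where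
`αᵢ = {a : d a = μ i}` lives in the first copy of `Fin n` and `βᵢ` is the same set in the
second copy. -/
theorem diag_subblocks_first_order_eq (n r : ℕ)
    (A : Matrix (Fin n ⊕ Fin n) (Fin n ⊕ Fin n) ℝ) (hA : A.PosDef)
    (d : Fin n → ℝ) (μ : Fin r → ℝ)
    (hd : Monotone d) (hdpos : ∀ j, 0 < d j) (hμ : StrictMono μ)
    (hdμ : ∀ j, ∃ i, d j = μ i) (hμd : ∀ i, ∃ j, d j = μ i)
    (S : Matrix (Fin n ⊕ Fin n) (Fin n ⊕ Fin n) ℝ)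
    (hS : Sᵀ * J' (Fin n) * S = J' (Fin n))
    (hSA : Sᵀ * A * S = Matrix.fromBlocks (Matrix.diagonal d) 0 0 (Matrix.diagonal d)) :
    ∃ c > 0, ∃ δ > 0,
      ∀ H : Matrix (Fin n ⊕ Fin n) (Fin n ⊕ Fin n) ℝ, H.IsSymm → ‖H‖ < δ → (A + H).PosDef →
      ∀ S' : Matrix (Fin n ⊕ Fin n) (Fin n ⊕ Fin n) ℝ,
        S'ᵀ * J' (Fin n) * S' = J' (Fin n) →
        (∃ e : Fin n → ℝ, Monotone e ∧ (∀ j, 0 < e j) ∧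
          S'ᵀ * (A + H) * S' = Matrix.fromBlocks (Matrix.diagonal e) 0 0 (Matrix.diagonal e)) →
        ∀ i : Fin r,
          ‖(S⁻¹ * S').submatrix
              (fun a : {a : Fin n // d a = μ i} => (Sum.inl a.val : Fin n ⊕ Fin n))
              (fun a : {a : Fin n // d a = μ i} => (Sum.inl a.val : Fin n ⊕ Fin n)) -
            (S⁻¹ * S').submatrix
              (fun a : {a : Fin n // d a = μ i} => (Sum.inr a.val : Fin n ⊕ Fin n))
              (fun a : {a : Fin n // d a = μ i} => (Sum.inr a.val : Fin n ⊕ Fin n))‖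
            ≤ c * ‖H‖ :=
  diag_subblocks_first_order_eq_general n r A hA d μ hdpos S hS hSA
end

section
/- Characterization of Sp(2n; A): Let A be a 2n×2n real positive definite matrix with distinct symplectic eigenvalues μ₁ < ⋯ < μ_r and index sets α_i = {j : d_j(A) = μ_i}, and let S ∈ Sp(2n; A) be fixed. Then a 2n×2n matrix Ŝ belongs to Sp(2n; A) if and only if Ŝ = SQ where Q = Q_{[1]} ⊕ˢ ⋯ ⊕ˢ Q_{[r]} and each Q_{[i]} is a 2|α_i|×2|α_i| orthosymplectic matrix. -/
/-
Write `Ŝ = S Q` with `Q = S⁻¹ Ŝ` symplectic; then `Ŝ ∈ Sp(2n; A)` says `Qᵀ (D ⊕ D) Q = E ⊕ E`.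
As `Q J Qᵀ = J`, this gives `Q · J (E ⊕ E) = J (D ⊕ D) · Q`, and squaring
(`(J (D ⊕ D))² = -(D² ⊕ D²)`) shows that `D² ⊕ D²` and `E² ⊕ E²` are similar. Equal spectra and
monotonicity force `E = D`, and then `Q` commutes with `D² ⊕ D²`, so it has no entries between
indices carrying different symplectic eigenvalues. For such a block diagonal `Q` the identities
`Qᵀ J Q = J` and `Qᵀ (D ⊕ D) Q = D ⊕ D` hold if and only if they hold on each block, where `J`
restricts to `J₂|αᵢ|` and `D ⊕ D` to `μᵢ I`.
-/

open Matrix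
open scoped Matrix.Norms.L2Operator Classical

namespace Matrix

variable {ι β R : Type*}

def IsBlockDiagonal [Zero R] (M : Matrix ι ι R) (b : ι → β) : Prop :=
  ∀ x y, b x ≠ b y → M x y = 0

section Zero

variable [Zero R] {b : ι → β} {M N : Matrix ι ι R}

theorem IsBlockDiagonal.transpose (hM : M.IsBlockDiagonal b) : Mᵀ.IsBlockDiagonal b :=
  fun x y hxy => hM y x hxy.symm

theorem IsBlockDiagonal.of_comp {γ : Type*} {φ : β → γ} (hM : M.IsBlockDiagonal (φ ∘ b))
    (hφ : Set.InjOn φ (Set.range b)) : M.IsBlockDiagonal b :=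
  fun x y hxy => hM x y fun h => hxy (hφ ⟨x, rfl⟩ ⟨y, rfl⟩ h)

theorem isBlockDiagonal_diagonal [DecidableEq ι] (v : ι → R) : (diagonal v).IsBlockDiagonal b :=
  fun _ _ hxy => diagonal_apply_ne _ fun h => hxy (congrArg b h)

variable {ρ : Type*} {κ : ρ → Type*} {g : ∀ i, κ i → ι} {c : ρ → β}

theorem isBlockDiagonal_iff_submatrix_eq_zero (hgc : ∀ i z, z ∈ Set.range (g i) ↔ b z = c i)
    (hc : c.Injective) (hcover : ∀ z, ∃ i, b z = c i) :
    M.IsBlockDiagonal b ↔ ∀ i i', i ≠ i' → M.submatrix (g i) (g i') = 0 := by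
  have hgb : ∀ i x, b (g i x) = c i := fun i x => (hgc i _).1 ⟨x, rfl⟩
  constructor
  · intro hM i i' hii'
    ext x y
    exact hM _ _ (by rw [hgb, hgb]; exact hc.ne hii')
  · intro h x y hxy
    obtain ⟨i, hi⟩ := hcover x
    obtain ⟨i', hi'⟩ := hcover y
    obtain ⟨x', rfl⟩ := (hgc i x).2 hi
    obtain ⟨y', rfl⟩ := (hgc i' y).2 hi'
    exact congrFun₂ (h i i' fun hii' => hxy (by rw [hi, hi', hii'])) x' y'

theorem IsBlockDiagonal.ext_of_submatrix (hM : M.IsBlockDiagonal b) (hN : N.IsBlockDiagonal b)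
    (hgc : ∀ i z, z ∈ Set.range (g i) ↔ b z = c i) (hcover : ∀ z, ∃ i, b z = c i)
    (h : ∀ i, M.submatrix (g i) (g i) = N.submatrix (g i) (g i)) : M = N := by
  ext x y
  by_cases hxy : b x = b y
  · obtain ⟨i, hi⟩ := hcover x
    obtain ⟨x', rfl⟩ := (hgc i x).2 hi
    obtain ⟨y', rfl⟩ := (hgc i y).2 (hxy ▸ hi)
    exact congrFun₂ (h i) x' y'
  · rw [hM x y hxy, hN x y hxy]

end Zero

section Semiring

variable [CommSemiring R] [Fintype ι] {b : ι → β} {M N Q : Matrix ι ι R}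

theorem IsBlockDiagonal.mul (hM : M.IsBlockDiagonal b) (hN : N.IsBlockDiagonal b) :
    (M * N).IsBlockDiagonal b := by
  intro x y hxy
  refine Finset.sum_eq_zero fun z _ => ?_
  by_cases hxz : b x = b z
  · exact mul_eq_zero_of_right _ (hN z y (hxz ▸ hxy))
  · exact mul_eq_zero_of_left (hM x z hxz) _

section Block

variable {κ : Type*} [Fintype κ] {g : κ → ι} {c : β}

theorem IsBlockDiagonal.submatrix_mul (hM : M.IsBlockDiagonal b) (hg : g.Injective)
    (hgc : ∀ z, z ∈ Set.range g ↔ b z = c) (N : Matrix ι ι R) :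
    (M * N).submatrix g g = M.submatrix g g * N.submatrix g g := by
  ext x y
  refine (Fintype.sum_of_injective g hg _ _ (fun z hz => ?_) fun _ => rfl).symm
  have hxz : b (g x) ≠ b z := by
    rw [(hgc _).1 ⟨x, rfl⟩]
    exact fun h => hz ((hgc z).2 h.symm)
  exact mul_eq_zero_of_left (hM _ _ hxz) _

theorem IsBlockDiagonal.submatrix_transpose_mul_mul (hQ : Q.IsBlockDiagonal b)
    (hM : M.IsBlockDiagonal b) (hg : g.Injective) (hgc : ∀ z, z ∈ Set.range g ↔ b z = c) :
    (Qᵀ * M * Q).submatrix g g = (Q.submatrix g g)ᵀ * M.submatrix g g * Q.submatrix g g := by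
  rw [(hQ.transpose.mul hM).submatrix_mul hg hgc, hQ.transpose.submatrix_mul hg hgc,
    transpose_submatrix]

end Block

theorem IsBlockDiagonal.transpose_mul_mul_eq_iff {ρ : Type*} {κ : ρ → Type*}
    [∀ i, Fintype (κ i)] {g : ∀ i, κ i → ι} {c : ρ → β} (hQ : Q.IsBlockDiagonal b)
    (hM : M.IsBlockDiagonal b) (hg : ∀ i, (g i).Injective)
    (hgc : ∀ i z, z ∈ Set.range (g i) ↔ b z = c i) (hcover : ∀ z, ∃ i, b z = c i) :
    Qᵀ * M * Q = M ↔ ∀ i, (Q.submatrix (g i) (g i))ᵀ * M.submatrix (g i) (g i) *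
      Q.submatrix (g i) (g i) = M.submatrix (g i) (g i) := by
  simp only [← hQ.submatrix_transpose_mul_mul hM (hg _) (hgc _)]
  exact ⟨fun h i => by rw [h], ((hQ.transpose.mul hM).mul hQ).ext_of_submatrix hM hgc hcover⟩

end Semiring

theorem IsBlockDiagonal.of_commute [CommRing R] [NoZeroDivisors R] [Fintype ι] [DecidableEq ι]
    {v : ι → R} {Q : Matrix ι ι R} (h : Commute (diagonal v) Q) : Q.IsBlockDiagonal v := by
  intro x y hxy
  have hxy' := congrFun₂ h.eq x y
  rw [diagonal_mul, mul_diagonal] at hxy'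
  refine (mul_eq_zero.1 ?_).resolve_left (sub_ne_zero.2 hxy)
  linear_combination hxy'

theorem transpose_mul_mul_congr [Fintype ι] [CommSemiring R] (S Q A : Matrix ι ι R) :
    (S * Q)ᵀ * A * (S * Q) = Qᵀ * (Sᵀ * A * S) * Q := by
  simp only [transpose_mul, Matrix.mul_assoc]

theorem charpoly_eq_of_semiconjBy [Fintype ι] [DecidableEq ι] [CommRing R]
    {Q X Y : Matrix ι ι R} (hQ : IsUnit Q.det) (h : SemiconjBy Q X Y) : X.charpoly = Y.charpoly := by
  rw [← nonsing_inv_mul_cancel_left Q X hQ, h.eq, charpoly_mul_comm, Matrix.mul_assoc,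
    mul_nonsing_inv _ hQ, Matrix.mul_one]

open Polynomial in
theorem univ_val_map_eq_of_charpoly_diagonal_eq [Fintype ι] [DecidableEq ι] [CommRing R]
    [IsDomain R] {v w : ι → R} (h : (diagonal v).charpoly = (diagonal w).charpoly) :
    Finset.univ.val.map v = Finset.univ.val.map w := by
  have hroots : ∀ u : ι → R, (diagonal u).charpoly.roots = Finset.univ.val.map u := fun u => by
    rw [charpoly_diagonal, roots_prod _ _ (Finset.prod_ne_zero_iff.2 fun i _ => X_sub_C_ne_zero _)]
    simp
  rw [← hroots, ← hroots, h]

end Matrix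

theorem Finset.univ_val_map_sumElim {α β γ : Type*} [Fintype α] [Fintype β] (f : α → γ)
    (g : β → γ) : (univ : Finset (α ⊕ β)).val.map (Sum.elim f g) =
      univ.val.map f + univ.val.map g := by
  rw [← univ_disjSum_univ, val_disjSum, Multiset.disjSum, Multiset.map_add, Multiset.map_map,
    Multiset.map_map]
  rfl

theorem Monotone.eq_of_univ_val_map_eq {α : Type*} [LinearOrder α] {n : ℕ} {f g : Fin n → α}
    (hf : Monotone f) (hg : Monotone g)
    (h : Finset.univ.val.map f = Finset.univ.val.map g) : f = g := by
  rw [Fin.univ_val_map, Fin.univ_val_map] at h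
  exact List.ofFn_injective
    (List.Perm.eq_of_sortedLE hf.sortedLE_ofFn hg.sortedLE_ofFn (Multiset.coe_eq_coe.mp h))

namespace Matrix

section Symplectic

variable {m R : Type*} [Fintype m] [DecidableEq m] [CommRing R]

theorem J_mul_diagonal_sumElim (v : m → R) :
    J m R * diagonal (Sum.elim v v) = diagonal (Sum.elim v v) * J m R := by
  simp [J, ← fromBlocks_diagonal, fromBlocks_multiply]

theorem J_mul_diagonal_sumElim_sq (v : m → R) :
    (J m R * diagonal (Sum.elim v v)) ^ 2 = -diagonal (Sum.elim v v ^ 2) := by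
  rw [sq, Matrix.mul_assoc, ← Matrix.mul_assoc _ (J m R), ← J_mul_diagonal_sumElim,
    Matrix.mul_assoc, ← Matrix.mul_assoc (J m R), J_squared, ← diagonal_pow, sq]
  simp

theorem SymplecticGroup.semiconjBy_J_mul {Q : Matrix (m ⊕ m) (m ⊕ m) R}
    (hQ : Q ∈ symplecticGroup m R) (M : Matrix (m ⊕ m) (m ⊕ m) R) :
    SemiconjBy Q (J m R * (Qᵀ * M * Q)) (J m R * M) := by
  rw [SymplecticGroup.mem_iff] at hQ
  simp only [SemiconjBy, ← Matrix.mul_assoc, hQ]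

theorem SymplecticGroup.semiconjBy_diagonal_sq {Q : Matrix (m ⊕ m) (m ⊕ m) R}
    (hQ : Q ∈ symplecticGroup m R) {d e : m → R}
    (h : Qᵀ * diagonal (Sum.elim d d) * Q = diagonal (Sum.elim e e)) :
    SemiconjBy Q (diagonal (Sum.elim e e ^ 2)) (diagonal (Sum.elim d d ^ 2)) := by
  have := (semiconjBy_J_mul hQ (diagonal (Sum.elim d d))).pow_right 2
  rwa [h, J_mul_diagonal_sumElim_sq, J_mul_diagonal_sumElim_sq, SemiconjBy.neg_right_iff] at this

theorem exists_mem_symplecticGroup_eq_mul {S S' : Matrix (m ⊕ m) (m ⊕ m) R}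
    (hS : S ∈ symplecticGroup m R) (hS' : S' ∈ symplecticGroup m R) :
    ∃ Q ∈ symplecticGroup m R, S' = S * Q := by
  refine ⟨S⁻¹ * S', ?_, ?_⟩
  · rw [← SymplecticGroup.coe_inv' ⟨S, hS⟩]
    exact mul_mem (SetLike.coe_mem _) hS'
  · rw [mul_nonsing_inv_cancel_left _ _ (SymplecticGroup.symplectic_det hS)]

end Symplectic

section Ordered

variable {m K : Type*} [Fintype m] [DecidableEq m] [Field K] [LinearOrder K]
  [IsStrictOrderedRing K]

theorem SymplecticGroup.eq_of_transpose_mul_diagonal_mul_eq {n : ℕ}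
    {Q : Matrix (Fin n ⊕ Fin n) (Fin n ⊕ Fin n) K} (hQ : Q ∈ symplecticGroup (Fin n) K)
    {d e : Fin n → K} (hd : Monotone d) (he : Monotone e) (hd0 : ∀ j, 0 ≤ d j)
    (he0 : ∀ j, 0 ≤ e j) (h : Qᵀ * diagonal (Sum.elim d d) * Q = diagonal (Sum.elim e e)) :
    e = d := by
  have hsq : ∀ v : Fin n → K, Sum.elim v v ^ 2 = Sum.elim (v ^ 2) (v ^ 2) := fun v => by
    ext (a | a) <;> rfl
  have hmap := univ_val_map_eq_of_charpoly_diagonal_eq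
    (charpoly_eq_of_semiconjBy (SymplecticGroup.symplectic_det hQ) (semiconjBy_diagonal_sq hQ h))
  rw [hsq, hsq, Finset.univ_val_map_sumElim, Finset.univ_val_map_sumElim, ← two_nsmul,
    ← two_nsmul] at hmap
  have hmono : ∀ v : Fin n → K, Monotone v → (∀ j, 0 ≤ v j) → Monotone (v ^ 2) :=
    fun v hv hv0 a b hab => pow_le_pow_left₀ (hv0 a) (hv hab) 2
  have hsq_eq := (hmono e he he0).eq_of_univ_val_map_eq (hmono d hd hd0)
    (nsmul_right_injective two_ne_zero hmap)
  funext j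
  exact (pow_left_inj₀ (he0 j) (hd0 j) two_ne_zero).1 (congrFun hsq_eq j)

theorem SymplecticGroup.isBlockDiagonal_of_transpose_mul_diagonal_mul_eq
    {Q : Matrix (m ⊕ m) (m ⊕ m) K} (hQ : Q ∈ symplecticGroup m K) {d : m → K}
    (hd0 : ∀ a, 0 ≤ d a) (h : Qᵀ * diagonal (Sum.elim d d) * Q = diagonal (Sum.elim d d)) :
    Q.IsBlockDiagonal (Sum.elim d d) := by
  have hd0' : ∀ z, 0 ≤ Sum.elim d d z := Sum.forall.2 ⟨hd0, hd0⟩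
  have hsq : Q.IsBlockDiagonal ((fun t : K => t ^ 2) ∘ Sum.elim d d) :=
    IsBlockDiagonal.of_commute (semiconjBy_diagonal_sq hQ h).symm
  refine hsq.of_comp ?_
  rintro _ ⟨x, rfl⟩ _ ⟨y, rfl⟩ hxy
  exact (pow_left_inj₀ (hd0' x) (hd0' y) two_ne_zero).1 hxy

end Ordered

section LevelSets

variable {m β ρ : Type*} {d : m → β} {c : ρ → β}

abbrev levelSetEmb (d : m → β) (c : β) : {a // d a = c} ⊕ {a // d a = c} → m ⊕ m :=
  Sum.map Subtype.val Subtype.val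

theorem levelSetEmb_injective (d : m → β) (c : β) : (levelSetEmb d c).Injective :=
  Subtype.val_injective.sumMap Subtype.val_injective

theorem mem_range_levelSetEmb {c : β} (z : m ⊕ m) :
    z ∈ Set.range (levelSetEmb d c) ↔ Sum.elim d d z = c := by
  rcases z with a | a <;> simp

theorem isBlockDiagonal_sumElim_iff {R : Type*} [Zero R] {Q : Matrix (m ⊕ m) (m ⊕ m) R}
    (hc : c.Injective) (hcover : ∀ a, ∃ i, d a = c i) :
    Q.IsBlockDiagonal (Sum.elim d d) ↔
      ∀ i i', i ≠ i' → Q.submatrix (levelSetEmb d (c i)) (levelSetEmb d (c i')) = 0 :=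
  isBlockDiagonal_iff_submatrix_eq_zero (fun _ => mem_range_levelSetEmb) hc
    (Sum.forall.2 ⟨hcover, hcover⟩)

variable [Fintype m] [DecidableEq m]

theorem J'_eq_neg_J : J' m = -J m ℝ := by
  simp [J', J, fromBlocks_neg]

theorem mem_symplecticGroup_iff_J' {S : Matrix (m ⊕ m) (m ⊕ m) ℝ} :
    S ∈ symplecticGroup m ℝ ↔ Sᵀ * J' m * S = J' m := by
  rw [SymplecticGroup.mem_iff', J'_eq_neg_J, Matrix.mul_neg, Matrix.neg_mul, neg_inj]

theorem isBlockDiagonal_J' (d : m → β) : (J' m).IsBlockDiagonal (Sum.elim d d) := by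
  rintro (a | a) (b | b) h
  · rfl
  · exact one_apply_ne (ne_of_apply_ne d h)
  · exact neg_eq_zero.2 (one_apply_ne (ne_of_apply_ne d h))
  · rfl

theorem J'_submatrix_sumMap {κ : Type*} [Fintype κ] [DecidableEq κ] {f : κ → m}
    (hf : f.Injective) : (J' m).submatrix (Sum.map f f) (Sum.map f f) = J' κ := by
  ext (a | a) (b | b) <;> simp [J', one_apply, hf.eq_iff]

theorem IsBlockDiagonal.transpose_mul_J'_mul_eq_iff {Q : Matrix (m ⊕ m) (m ⊕ m) ℝ}
    (hQ : Q.IsBlockDiagonal (Sum.elim d d)) (hcover : ∀ a, ∃ i, d a = c i) :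
    Qᵀ * J' m * Q = J' m ↔ ∀ i,
      (Q.submatrix (levelSetEmb d (c i)) (levelSetEmb d (c i)))ᵀ * J' {a // d a = c i} *
        Q.submatrix (levelSetEmb d (c i)) (levelSetEmb d (c i)) = J' {a // d a = c i} := by
  rw [hQ.transpose_mul_mul_eq_iff (isBlockDiagonal_J' d) (fun i => levelSetEmb_injective d (c i))
    (fun _ => mem_range_levelSetEmb) (Sum.forall.2 ⟨hcover, hcover⟩)]
  simp only [levelSetEmb, J'_submatrix_sumMap Subtype.val_injective]

theorem IsBlockDiagonal.transpose_mul_diagonal_mul_eq_iff {R : Type*} [CommRing R] [IsDomain R]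
    {d : m → R} {c : ρ → R} {Q : Matrix (m ⊕ m) (m ⊕ m) R}
    (hQ : Q.IsBlockDiagonal (Sum.elim d d)) (hcover : ∀ a, ∃ i, d a = c i)
    (hd : ∀ a, d a ≠ 0) :
    Qᵀ * diagonal (Sum.elim d d) * Q = diagonal (Sum.elim d d) ↔ ∀ i,
      (Q.submatrix (levelSetEmb d (c i)) (levelSetEmb d (c i)))ᵀ *
        Q.submatrix (levelSetEmb d (c i)) (levelSetEmb d (c i)) = 1 := by
  rw [hQ.transpose_mul_mul_eq_iff (isBlockDiagonal_diagonal _)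
    (fun i => levelSetEmb_injective d (c i)) (fun _ => mem_range_levelSetEmb)
    (Sum.forall.2 ⟨hcover, hcover⟩)]
  refine forall_congr' fun i => ?_
  have hlabel : ∀ z, Sum.elim d d (levelSetEmb d (c i) z) = c i :=
    fun z => (mem_range_levelSetEmb _).1 ⟨z, rfl⟩
  rw [submatrix_diagonal _ _ (levelSetEmb_injective d (c i)), Function.comp_def]
  simp only [hlabel, ← smul_one_eq_diagonal, Matrix.mul_smul, Matrix.mul_one, Matrix.smul_mul]
  refine ⟨fun h => ext fun x y => mul_left_cancel₀ ?_ (congrFun₂ h x y), fun h => by rw [h]⟩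
  have hd' : ∀ z, Sum.elim d d z ≠ 0 := Sum.forall.2 ⟨hd, hd⟩
  exact hlabel x ▸ hd' _

end LevelSets

end Matrix
theorem sp2nA_characterization_general (n r : ℕ)
    (A : Matrix (Fin n ⊕ Fin n) (Fin n ⊕ Fin n) ℝ)
    (d : Fin n → ℝ) (μ : Fin r → ℝ)
    (hd : Monotone d) (hdpos : ∀ j, 0 < d j) (hμ : StrictMono μ)
    (hdμ : ∀ j, ∃ i, d j = μ i)
    (S : Matrix (Fin n ⊕ Fin n) (Fin n ⊕ Fin n) ℝ)
    (hS : Sᵀ * J' (Fin n) * S = J' (Fin n))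
    (hSA : Sᵀ * A * S = Matrix.fromBlocks (Matrix.diagonal d) 0 0 (Matrix.diagonal d))
    (Shat : Matrix (Fin n ⊕ Fin n) (Fin n ⊕ Fin n) ℝ) :
    (Shatᵀ * J' (Fin n) * Shat = J' (Fin n) ∧
      ∃ e : Fin n → ℝ, Monotone e ∧ (∀ j, 0 < e j) ∧
        Shatᵀ * A * Shat = Matrix.fromBlocks (Matrix.diagonal e) 0 0 (Matrix.diagonal e)) ↔
    ∃ Q : Matrix (Fin n ⊕ Fin n) (Fin n ⊕ Fin n) ℝ,
      (∀ i i' : Fin r, i ≠ i' →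
        (Q.submatrix
              (Sum.map (Subtype.val : {a : Fin n // d a = μ i} → Fin n)
                (Subtype.val : {a : Fin n // d a = μ i} → Fin n))
              (Sum.map (Subtype.val : {a : Fin n // d a = μ i'} → Fin n)
                (Subtype.val : {a : Fin n // d a = μ i'} → Fin n))) = 0) ∧
      (∀ i : Fin r,
        (Q.submatrix
              (Sum.map (Subtype.val : {a : Fin n // d a = μ i} → Fin n)
                (Subtype.val : {a : Fin n // d a = μ i} → Fin n))
              (Sum.map (Subtype.val : {a : Fin n // d a = μ i} → Fin n)
                (Subtype.val : {a : Fin n // d a = μ i} → Fin n)))ᵀ *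
          (Q.submatrix
              (Sum.map (Subtype.val : {a : Fin n // d a = μ i} → Fin n)
                (Subtype.val : {a : Fin n // d a = μ i} → Fin n))
              (Sum.map (Subtype.val : {a : Fin n // d a = μ i} → Fin n)
                (Subtype.val : {a : Fin n // d a = μ i} → Fin n))) = 1 ∧
        (Q.submatrix
              (Sum.map (Subtype.val : {a : Fin n // d a = μ i} → Fin n)
                (Subtype.val : {a : Fin n // d a = μ i} → Fin n))
              (Sum.map (Subtype.val : {a : Fin n // d a = μ i} → Fin n)
                (Subtype.val : {a : Fin n // d a = μ i} → Fin n)))ᵀ *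
          J' {a : Fin n // d a = μ i} *
          (Q.submatrix
              (Sum.map (Subtype.val : {a : Fin n // d a = μ i} → Fin n)
                (Subtype.val : {a : Fin n // d a = μ i} → Fin n))
              (Sum.map (Subtype.val : {a : Fin n // d a = μ i} → Fin n)
                (Subtype.val : {a : Fin n // d a = μ i} → Fin n))) = J' {a : Fin n // d a = μ i}) ∧
      Shat = S * Q := by
  rw [fromBlocks_diagonal] at hSA
  rw [← mem_symplecticGroup_iff_J']
  simp only [fromBlocks_diagonal]
  have hd0 : ∀ j, d j ≠ 0 := fun j => (hdpos j).ne'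
  constructor
  · rintro ⟨hShat, e, he, hepos, hShatA⟩
    obtain ⟨Q, hQ, rfl⟩ :=
      exists_mem_symplecticGroup_eq_mul (mem_symplecticGroup_iff_J'.2 hS) hShat
    rw [transpose_mul_mul_congr, hSA] at hShatA
    obtain rfl := SymplecticGroup.eq_of_transpose_mul_diagonal_mul_eq hQ hd he
      (fun j => (hdpos j).le) (fun j => (hepos j).le) hShatA
    have hQd := SymplecticGroup.isBlockDiagonal_of_transpose_mul_diagonal_mul_eq hQ
      (fun j => (hdpos j).le) hShatA
    exact ⟨Q, (isBlockDiagonal_sumElim_iff hμ.injective hdμ).1 hQd,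
      fun i => ⟨(hQd.transpose_mul_diagonal_mul_eq_iff hdμ hd0).1 hShatA i,
        (hQd.transpose_mul_J'_mul_eq_iff hdμ).1 (mem_symplecticGroup_iff_J'.1 hQ) i⟩, rfl⟩
  · rintro ⟨Q, hoff, hblocks, rfl⟩
    have hQd := (isBlockDiagonal_sumElim_iff hμ.injective hdμ).2 hoff
    have hQJ := (hQd.transpose_mul_J'_mul_eq_iff hdμ).2 fun i => (hblocks i).2
    have hQA := (hQd.transpose_mul_diagonal_mul_eq_iff hdμ hd0).2 fun i => (hblocks i).1
    refine ⟨?_, d, hd, hdpos, ?_⟩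
    · rw [mem_symplecticGroup_iff_J', transpose_mul_mul_congr, hS, hQJ]
    · rw [transpose_mul_mul_congr, hSA, hQA]

/-- **Characterization of `Sp(2n; A)`**: given a fixed `S ∈ Sp(2n; A)`, a matrix `Ŝ` belongs
to `Sp(2n; A)` if and only if `Ŝ = SQ` where `Q` is a symplectic direct sum of orthosymplectic
blocks `Q_[i]` of sizes `2|αᵢ| × 2|αᵢ|` (i.e. all `γᵢγᵢ'` blocks of `Q` with `i ≠ i'` vanish,
and each diagonal `γᵢγᵢ` block of `Q` is orthosymplectic). -/
theorem sp2nA_characterization (n r : ℕ)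
    (A : Matrix (Fin n ⊕ Fin n) (Fin n ⊕ Fin n) ℝ) (hA : A.PosDef)
    (d : Fin n → ℝ) (μ : Fin r → ℝ)
    (hd : Monotone d) (hdpos : ∀ j, 0 < d j) (hμ : StrictMono μ)
    (hdμ : ∀ j, ∃ i, d j = μ i) (hμd : ∀ i, ∃ j, d j = μ i)
    (S : Matrix (Fin n ⊕ Fin n) (Fin n ⊕ Fin n) ℝ)
    (hS : Sᵀ * J' (Fin n) * S = J' (Fin n))
    (hSA : Sᵀ * A * S = Matrix.fromBlocks (Matrix.diagonal d) 0 0 (Matrix.diagonal d))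
    (Shat : Matrix (Fin n ⊕ Fin n) (Fin n ⊕ Fin n) ℝ) :
    (Shatᵀ * J' (Fin n) * Shat = J' (Fin n) ∧
      ∃ e : Fin n → ℝ, Monotone e ∧ (∀ j, 0 < e j) ∧
        Shatᵀ * A * Shat = Matrix.fromBlocks (Matrix.diagonal e) 0 0 (Matrix.diagonal e)) ↔
    ∃ Q : Matrix (Fin n ⊕ Fin n) (Fin n ⊕ Fin n) ℝ,
      (∀ i i' : Fin r, i ≠ i' →
        (Q.submatrix
              (Sum.map (Subtype.val : {a : Fin n // d a = μ i} → Fin n)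
                (Subtype.val : {a : Fin n // d a = μ i} → Fin n))
              (Sum.map (Subtype.val : {a : Fin n // d a = μ i'} → Fin n)
                (Subtype.val : {a : Fin n // d a = μ i'} → Fin n))) = 0) ∧
      (∀ i : Fin r,
        (Q.submatrix
              (Sum.map (Subtype.val : {a : Fin n // d a = μ i} → Fin n)
                (Subtype.val : {a : Fin n // d a = μ i} → Fin n))
              (Sum.map (Subtype.val : {a : Fin n // d a = μ i} → Fin n)
                (Subtype.val : {a : Fin n // d a = μ i} → Fin n)))ᵀ *
          (Q.submatrix
              (Sum.map (Subtype.val : {a : Fin n // d a = μ i} → Fin n)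
                (Subtype.val : {a : Fin n // d a = μ i} → Fin n))
              (Sum.map (Subtype.val : {a : Fin n // d a = μ i} → Fin n)
                (Subtype.val : {a : Fin n // d a = μ i} → Fin n))) = 1 ∧
        (Q.submatrix
              (Sum.map (Subtype.val : {a : Fin n // d a = μ i} → Fin n)
                (Subtype.val : {a : Fin n // d a = μ i} → Fin n))
              (Sum.map (Subtype.val : {a : Fin n // d a = μ i} → Fin n)
                (Subtype.val : {a : Fin n // d a = μ i} → Fin n)))ᵀ *
          J' {a : Fin n // d a = μ i} *
          (Q.submatrix
              (Sum.map (Subtype.val : {a : Fin n // d a = μ i} → Fin n)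
                (Subtype.val : {a : Fin n // d a = μ i} → Fin n))
              (Sum.map (Subtype.val : {a : Fin n // d a = μ i} → Fin n)
                (Subtype.val : {a : Fin n // d a = μ i} → Fin n))) = J' {a : Fin n // d a = μ i}) ∧
      Shat = S * Q :=
  sp2nA_characterization_general n r A d μ hd hdpos hμ hdμ S hS hSA Shat
end
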